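/- Consider the forced-move cops-and-robbers game on a toroidal grid C_n □ C_n with a straight-ahead orientation. Let K be a conflux and consider a position of the game, with the robber to move, in which there is one cop on each main corner of K, there is a cop on the secondary corner of K without out-neighbours in K if such a corner exists, and the robber occupies a vertex of K. Then these cops have a strategy guaranteeing that the robber is captured or is confined to a stream containing K. -/

import Mathlib

namespace CopsPaper

/-! ## Generic cops-and-robbers machinery.

A cop strategy is a function from the list of robber positions seen so far to
the new cop positions.  Quantifying over all (legal) robber position sequences
is equivalent to quantifying over all robber strategies. -/

/-- A lazy step in a digraph: stay put or move along an arc. -/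
def Step {α : Type*} (A : α → α → Prop) (u v : α) : Prop := u = v ∨ A u v

/-- The cop positions induced by a cop strategy `σ` against the robber
trajectory `rob`, in the game where the cops move first:
`cops 0 = σ []` are the initial positions, and the cops' `(t+1)`-st positions
are chosen after seeing `rob 0, …, rob t`. -/
def playCops {α ι : Type*} (σ : List α → ι → α) (rob : ℕ → α) (t : ℕ) : ι → α :=
  σ ((List.range t).map rob)

/-- `k` cops have a winning strategy in the cops-and-robbers game on the
digraph with arc relation `A` (both cops and robber may stay put or move
along an arc on their turn; the cops choose their positions first, the robber
then chooses any starting vertex, and the cops win if at some moment a cop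
occupies the robber's vertex). -/
def CopsWin {α : Type*} (A : α → α → Prop) (k : ℕ) : Prop :=
  ∃ σ : List α → Fin k → α,
    ∀ rob : ℕ → α, (∀ t, Step A (rob t) (rob (t + 1))) →
      (∀ t i, Step A (playCops σ rob t i) (playCops σ rob (t + 1) i)) ∧
      ∃ t, ∃ i, playCops σ rob t i = rob t ∨ playCops σ rob (t + 1) i = rob t

/-- The cop number of a digraph. -/
noncomputable def copNumber {α : Type*} (A : α → α → Prop) : ℕ :=
  sInf {k | CopsWin A k}

/-- Cop positions in a game played from a given position: the cops start at
`c₀`, the robber moves first, and the cops' `(t+1)`-st positions are chosen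
after seeing `rob 0, …, rob (t+1)`. -/
def copsFrom {α ι : Type*} (σ : List α → ι → α) (c₀ : ι → α) (rob : ℕ → α) :
    ℕ → ι → α
  | 0 => c₀
  | t + 1 => σ ((List.range (t + 2)).map rob)

/-- The robber is captured in the position game (robber moves first):
either a cop moves onto the robber's current vertex, or the robber moves
onto a cop. -/
def Captured {α ι : Type*} (cops : ℕ → ι → α) (rob : ℕ → α) : Prop :=
  ∃ t, ∃ i, cops t i = rob t ∨ cops t i = rob (t + 1)

/-- From the position with cops at `c₀`, robber at `r₀` and the robber to
move (cops stepping lazily along `A`, robber stepping along `R`), the cops can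
guarantee `Goal` (a predicate of the resulting cop and robber trajectories). -/
def EnsureFrom {α ι : Type*} (A R : α → α → Prop) (c₀ : ι → α) (r₀ : α)
    (Goal : (ℕ → ι → α) → (ℕ → α) → Prop) : Prop :=
  ∃ σ : List α → ι → α,
    ∀ rob : ℕ → α, rob 0 = r₀ → (∀ t, R (rob t) (rob (t + 1))) →
      (∀ t i, Step A (copsFrom σ c₀ rob t i) (copsFrom σ c₀ rob (t + 1) i)) ∧
      Goal (copsFrom σ c₀ rob) rob

/-- The robber is captured in the game where the cops move first. -/
def CapturedG {α ι : Type*} (cops : ℕ → ι → α) (rob : ℕ → α) : Prop :=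
  ∃ t, ∃ i, cops t i = rob t ∨ cops (t + 1) i = rob t

/-- In the game on the digraph `A` (cops choose their starting vertices first,
robber steps along `R`), `k` cops can guarantee `Goal`. -/
def EnsureGame {α : Type*} (A R : α → α → Prop) (k : ℕ)
    (Goal : (ℕ → Fin k → α) → (ℕ → α) → Prop) : Prop :=
  ∃ σ : List α → Fin k → α,
    ∀ rob : ℕ → α, (∀ t, R (rob t) (rob (t + 1))) →
      (∀ t i, Step A (playCops σ rob t i) (playCops σ rob (t + 1) i)) ∧
      Goal (playCops σ rob) rob

/-- `u` can reach `v` in at most `m` (lazy) moves along the digraph `A`. -/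
def ReachIn {α : Type*} (A : α → α → Prop) (m : ℕ) (u v : α) : Prop :=
  ∃ f : ℕ → α, f 0 = u ∧ f m = v ∧ ∀ t, t < m → Step A (f t) (f (t + 1))

/-! ## The toroidal grid `Cₙ □ Cₙ` with a straight-ahead orientation. -/

/-- Vertices of the toroidal grid. -/
abbrev Vtx (n : ℕ) := ZMod n × ZMod n

/-- `a` is `1` or `-1`. -/
def PM (a : ℤ) : Prop := a = 1 ∨ a = -1

/-- The straight-ahead orientation of `Cₙ □ Cₙ` determined by `δ, ε`:
the out-neighbours of `(x, y)` are `(x + δ y, y)` and `(x, y + ε x)`. -/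
def Adj {n : ℕ} (δ ε : ZMod n → ℤ) (p q : Vtx n) : Prop :=
  (q.1 = p.1 + (δ p.2 : ZMod n) ∧ q.2 = p.2) ∨
  (q.1 = p.1 ∧ q.2 = p.2 + (ε p.1 : ZMod n))

/-- The out-neighbour of `p` along its column (the first coordinate moves). -/
def vOut {n : ℕ} (δ : ZMod n → ℤ) (p : Vtx n) : Vtx n :=
  (p.1 + (δ p.2 : ZMod n), p.2)

/-- The out-neighbour of `p` along its row (the second coordinate moves). -/
def hOut {n : ℕ} (ε : ZMod n → ℤ) (p : Vtx n) : Vtx n :=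
  (p.1, p.2 + (ε p.1 : ZMod n))

/-- The type `τ(p) = (δ y, ε x)` of a vertex `p = (x, y)`. -/
def ty {n : ℕ} (δ ε : ZMod n → ℤ) (p : Vtx n) : ℤ × ℤ := (δ p.2, ε p.1)

/-- The direction `u - w` of the main diagonal of a vertex. -/
def mdDir {n : ℕ} (δ ε : ZMod n → ℤ) (p : Vtx n) : ℤ × ℤ := (δ p.2, -(ε p.1))

/-- The secondary diagonal `SD(p) = {p + r·τ(p) : r ∈ ℤ}`. -/
def SD {n : ℕ} (δ ε : ZMod n → ℤ) (p : Vtx n) : Set (Vtx n) :=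
  {q | ∃ r : ℤ, q.1 = p.1 + ((r * δ p.2 : ℤ) : ZMod n) ∧
                q.2 = p.2 + ((r * ε p.1 : ℤ) : ZMod n)}

/-- The main diagonal `MD(p) = {p + r·(u - w) : r ∈ ℤ}` where `u, w` are the
out-neighbours of `p`. -/
def MD {n : ℕ} (δ ε : ZMod n → ℤ) (p : Vtx n) : Set (Vtx n) :=
  {q | ∃ r : ℤ, q.1 = p.1 + ((r * δ p.2 : ℤ) : ZMod n) ∧
                q.2 = p.2 - ((r * ε p.1 : ℤ) : ZMod n)}

/-- An element of `{1, -1}² ⊆ ℤ²`. -/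
def IsType (d : ℤ × ℤ) : Prop := (d.1 = 1 ∨ d.1 = -1) ∧ (d.2 = 1 ∨ d.2 = -1)

/-- Orthogonality in `ℤ²`. -/
def Orth (a b : ℤ × ℤ) : Prop := a.1 * b.1 + a.2 * b.2 = 0

/-! ### Streams -/

/-- A stream: a set of consecutive columns (`vert = true`, lines indexed by
the second coordinate, with constant `δ`) or consecutive rows (`vert = false`,
lines indexed by the first coordinate, with constant `ε`), all oriented in the
same direction, starting at index `a` and of width `w`. -/
structure Strm (n : ℕ) (δ ε : ZMod n → ℤ) where
  vert : Bool
  a : ZMod n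
  w : ℕ
  one_le : 1 ≤ w
  le_n : w ≤ n
  const : ∀ i : ℕ, i < w →
    (if vert then δ else ε) (a + (i : ZMod n)) = (if vert then δ else ε) a

namespace Strm

variable {n : ℕ} {δ ε : ZMod n → ℤ}

/-- The coordinate of a vertex indexing the lines of the stream's kind. -/
def proj (S : Strm n δ ε) (p : Vtx n) : ZMod n := if S.vert then p.2 else p.1

/-- The vertex set `V(S)` of a stream. -/
def verts (S : Strm n δ ε) : Set (Vtx n) :=
  {p | ∃ i : ℕ, i < S.w ∧ S.proj p = S.a + (i : ZMod n)}

/-- The common direction of the lines of a stream. -/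
def dir (S : Strm n δ ε) : ℤ := (if S.vert then δ else ε) S.a

/-- The stream is maximal: it cannot be extended by a line on either side. -/
def IsMax (S : Strm n δ ε) : Prop :=
  S.w = n ∨ ((if S.vert then δ else ε) (S.a - 1) ≠ (if S.vert then δ else ε) S.a ∧
             (if S.vert then δ else ε) (S.a + (S.w : ZMod n)) ≠ (if S.vert then δ else ε) S.a)

/-- The vertex of the line of the stream's kind with index `b` closest to `p`. -/
def cl (S : Strm n δ ε) (b : ZMod n) (p : Vtx n) : Vtx n :=
  if S.vert then (p.1, b) else (b, p.2)

end Strm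

/-- The largest width of a stream in the grid. -/
noncomputable def maxW (n : ℕ) (δ ε : ZMod n → ℤ) : ℕ :=
  sSup {w | ∃ S : Strm n δ ε, S.w = w}

/-- The vertices of the substream `S'` of `S` formed by the lines of `S` at
distance at least `m - 1` from its boundary lines, where `m = ⌊w(S)/3⌋ + 1`. -/
def innerVerts {n : ℕ} {δ ε : ZMod n → ℤ} (S : Strm n δ ε) : Set (Vtx n) :=
  {p | ∃ i : ℕ, S.w / 3 ≤ i ∧ i + S.w / 3 ≤ S.w - 1 ∧ S.proj p = S.a + (i : ZMod n)}

/-- The cyclic distance between two elements of `ZMod n`. -/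
def cdist {n : ℕ} (a b : ZMod n) : ℕ := min (b - a).val (a - b).val

/-! ### Confluxes, corners and guard posts -/

/-- Adjacency in the underlying (undirected) grid. -/
def UAdj {n : ℕ} (δ ε : ZMod n → ℤ) (p q : Vtx n) : Prop := Adj δ ε p q ∨ Adj δ ε q p

/-- Number of neighbours of `v` inside `K`. -/
noncomputable def nbrCount {n : ℕ} (δ ε : ZMod n → ℤ) (K : Set (Vtx n)) (v : Vtx n) : ℕ :=
  {u ∈ K | UAdj δ ε v u}.ncard

/-- Number of out-neighbours of `v` inside `K`. -/
noncomputable def outCount {n : ℕ} (δ ε : ZMod n → ℤ) (K : Set (Vtx n)) (v : Vtx n) : ℕ :=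
  {u ∈ K | Adj δ ε v u}.ncard

/-- A corner of `K`: a vertex of `K` with the minimum number of neighbours in `K`. -/
def Corner {n : ℕ} (δ ε : ZMod n → ℤ) (K : Set (Vtx n)) (v : Vtx n) : Prop :=
  v ∈ K ∧ ∀ u ∈ K, nbrCount δ ε K v ≤ nbrCount δ ε K u

/-- A main corner of `K`: when `K` has four corners, a corner with an odd
number of out-neighbours in `K`; when `K` has at most two corners, every
corner is main. -/
def MainCorner {n : ℕ} (δ ε : ZMod n → ℤ) (K : Set (Vtx n)) (v : Vtx n) : Prop :=
  Corner δ ε K v ∧ ({u | Corner δ ε K u}.ncard ≤ 2 ∨ Odd (outCount δ ε K v))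

/-- A secondary corner of `K` without out-neighbours in `K`. -/
def SecNoOut {n : ℕ} (δ ε : ZMod n → ℤ) (K : Set (Vtx n)) (v : Vtx n) : Prop :=
  Corner δ ε K v ∧ ¬ MainCorner δ ε K v ∧ ∀ u ∈ K, ¬ Adj δ ε v u

/-- The terminal corner of `K`: a corner with no out-neighbours in `K`. -/
def TermCorner {n : ℕ} (δ ε : ZMod n → ℤ) (K : Set (Vtx n)) (v : Vtx n) : Prop :=
  Corner δ ε K v ∧ ∀ u ∈ K, ¬ Adj δ ε v u

/-- The vertical guard post of `K`: the vertical out-neighbour of the main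
corner of `K` whose vertical edge leaves `K` (but no other edge leaves `K`,
unless `K` has only one vertex). -/
def IsVGuard {n : ℕ} (δ ε : ZMod n → ℤ) (K : Set (Vtx n)) (g : Vtx n) : Prop :=
  ∃ v, MainCorner δ ε K v ∧ vOut δ v ∉ K ∧ (K = {v} ∨ hOut ε v ∈ K) ∧ g = vOut δ v

/-- The horizontal guard post of `K`. -/
def IsHGuard {n : ℕ} (δ ε : ZMod n → ℤ) (K : Set (Vtx n)) (g : Vtx n) : Prop :=
  ∃ v, MainCorner δ ε K v ∧ hOut ε v ∉ K ∧ (K = {v} ∨ vOut δ v ∈ K) ∧ g = hOut ε v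

/-- The terminal guard post of a (maximal) conflux `K`: the vertex outside `K`
with the same out-neighbours as the terminal corner of `K`. -/
def IsTermGuard {n : ℕ} (δ ε : ZMod n → ℤ) (K : Set (Vtx n)) (g : Vtx n) : Prop :=
  g ∉ K ∧ ∃ c, TermCorner δ ε K c ∧
    ({vOut δ g, hOut ε g} : Set (Vtx n)) = {vOut δ c, hOut ε c}

/-- The number of steps needed to reach the boundary of `K` from `p`, moving
repeatedly by `st` (the boundary is reached when the next step exits `K`). -/
noncomputable def exitDist {n : ℕ} (K : Set (Vtx n)) (p : Vtx n) (st : ℤ × ℤ) : ℕ :=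
  sInf {m : ℕ |
    (p.1 + ((((m + 1 : ℕ) : ℤ) * st.1 : ℤ) : ZMod n),
     p.2 + ((((m + 1 : ℕ) : ℤ) * st.2 : ℤ) : ZMod n)) ∉ K}

/-! ### Maximal confluxes, escape distances and shadows -/

/-- `y` and `y'` index lines of the same maximal stream (for the direction
function `f`): `f` is constant on a cyclic interval containing both. -/
def SameBlock {n : ℕ} (f : ZMod n → ℤ) (y y' : ZMod n) : Prop :=
  (∃ m : ℕ, y' = y + (m : ZMod n) ∧ ∀ i : ℕ, i ≤ m → f (y + (i : ZMod n)) = f y) ∨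
  (∃ m : ℕ, y = y' + (m : ZMod n) ∧ ∀ i : ℕ, i ≤ m → f (y' + (i : ZMod n)) = f y')

/-- The maximal conflux containing `p`. -/
def maxConflux {n : ℕ} (δ ε : ZMod n → ℤ) (p : Vtx n) : Set (Vtx n) :=
  {q | SameBlock ε q.1 p.1 ∧ SameBlock δ q.2 p.2}

/-- The horizontal escape distance: the length of a shortest directed path
from `p` to a vertex outside its maximal conflux using only arcs that change
the first coordinate. -/
noncomputable def HE {n : ℕ} (δ ε : ZMod n → ℤ) (p : Vtx n) : ℕ :=
  sInf {m : ℕ | (p.1 + (((m : ℤ) * δ p.2 : ℤ) : ZMod n), p.2) ∉ maxConflux δ ε p}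

/-- The vertical escape distance. -/
noncomputable def VE {n : ℕ} (δ ε : ZMod n → ℤ) (p : Vtx n) : ℕ :=
  sInf {m : ℕ | (p.1, p.2 + (((m : ℤ) * ε p.1 : ℤ) : ZMod n)) ∉ maxConflux δ ε p}

/-- `w` is a main shadow of `v`. -/
def IsMainShadow {n : ℕ} (δ ε : ZMod n → ℤ) (v w : Vtx n) : Prop :=
  w ∈ MD δ ε v ∧ ty δ ε w = ty δ ε v ∧ VE δ ε v = HE δ ε w

/-- `w` is a secondary shadow of `v`. -/
def IsSecShadow {n : ℕ} (δ ε : ZMod n → ℤ) (v w : Vtx n) : Prop :=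
  w ∈ SD δ ε v ∧ ty δ ε w = -(ty δ ε v) ∧ VE δ ε v = HE δ ε w

/-- `w` is a diagonal shadow of `v`. -/
def IsDiagShadow {n : ℕ} (δ ε : ZMod n → ℤ) (v w : Vtx n) : Prop :=
  IsMainShadow δ ε v w ∨ IsSecShadow δ ε v w

/-! ### `k`-regular orientations and the conflux digraph -/

/-- `f` is, after the cyclic offset `c`, constant on consecutive blocks of `k`
indices with adjacent blocks taking opposite values in `{1, -1}`.  A
straight-ahead orientation is `k`-regularly oriented iff `2k ∣ n` and both `δ`
and `ε` satisfy this for some offset. -/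
def BlockAltAt {n : ℕ} (k : ℕ) (f : ZMod n → ℤ) (c : ZMod n) : Prop :=
  ∀ m : ℕ, f (c + (m : ZMod n)) = if m / k % 2 = 0 then 1 else -1

/-- The alternating direction function of the conflux digraph
(a 1-regularly oriented grid). -/
def altF (m : ℕ) : ZMod m → ℤ := fun q => if q.val % 2 = 0 then 1 else -1

/-- The index of the block (of length `k`, after offset `c`) containing `x`. -/
def blk {n : ℕ} (k : ℕ) (c x : ZMod n) : ZMod (n / k) :=
  (((x - c).val / k : ℕ) : ZMod (n / k))

/-- The projection sending a vertex of a `k`-regularly oriented grid to the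
vertex of the conflux digraph corresponding to its maximal conflux. -/
def confMap {n : ℕ} (k : ℕ) (cδ cε : ZMod n) (p : Vtx n) : Vtx (n / k) :=
  (blk k cε p.1, blk k cδ p.2)

/-- The translated main diagonal `MD_s(v, d) = {x : x - s·(τ(v)+d)/2 ∈ MD(v)}`. -/
def MDs {n : ℕ} (δ ε : ZMod n → ℤ) (s : ℕ) (v : Vtx n) (d : ℤ × ℤ) : Set (Vtx n) :=
  {x | (x.1 - (((s : ℤ) * (((ty δ ε v).1 + d.1) / 2) : ℤ) : ZMod n),
        x.2 - (((s : ℤ) * (((ty δ ε v).2 + d.2) / 2) : ℤ) : ZMod n)) ∈ MD δ ε v}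

/-- The diagonal distance `𝔡(u, v)` between vertices of opposite types. -/
noncomputable def ddist {n : ℕ} (δ ε : ZMod n → ℤ) (u v : Vtx n) : ℕ :=
  sInf {t : ℕ | ∃ d : ℤ × ℤ, IsType d ∧ Orth (ty δ ε u) d ∧ v ∈ MDs δ ε t u d}

/-- The set `B(u, v) = ⋃_{i ≤ 𝔡(u,v)} MD_i(u, d)`, where `d` is chosen so that
`v ∈ MD_{𝔡(u,v)}(u, d)`. -/
noncomputable def BSet {n : ℕ} (δ ε : ZMod n → ℤ) (u v : Vtx n) : Set (Vtx n) :=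
  {x | ∃ d : ℤ × ℤ, IsType d ∧ Orth (ty δ ε u) d ∧ v ∈ MDs δ ε (ddist δ ε u v) u d ∧
       ∃ i : ℕ, i ≤ ddist δ ε u v ∧ x ∈ MDs δ ε i u d}

/-! ### Mirrors -/

/-- The mirror of the diagonal shadow given by a robber at `v` and a cop at `c`:
the diagonal line through `(v₁, c₂)` with direction `d`. -/
def MirrorOf {n : ℕ} (v c : Vtx n) (d : ℤ × ℤ) : Set (Vtx n) :=
  {p | ∃ r : ℤ, p.1 = v.1 + ((r * d.1 : ℤ) : ZMod n) ∧ p.2 = c.2 + ((r * d.2 : ℤ) : ZMod n)}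

/-- Translation of a set of grid vertices by an integer vector. -/
def shiftSet {n : ℕ} (w : ℤ × ℤ) (L : Set (Vtx n)) : Set (Vtx n) :=
  (fun p : Vtx n => (p.1 + (w.1 : ZMod n), p.2 + (w.2 : ZMod n))) '' L

/-!
Inside the conflux `K = X × Y` the robber moves in one fixed direction along each coordinate, so
he can only leave `K` past its last row `xe` (into the column stream) or past its last column `ye`
(into the row stream). The cop on the exit corner `(xe, ye)` waits. When the robber crosses row
`xe`, this cop and the cop on `(xe, yo)` step along their columns into the robber's new row, and
from then on they follow him row by row on the two boundary columns `ye`, `yo`, which he can no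
longer cross without being caught; crossing column `ye` is handled in the same way with the cop on
`(xo, ye)`. These are the cops we are given: `(xe, yo)` and `(xo, ye)` are main corners unless they
coincide with `(xe, ye)`, and `(xe, ye)`, which has no out-neighbour in `K`, is main or the
secondary corner without out-neighbours.
-/

section Strategies

variable {α ι M : Type*}

lemma EnsureFrom.mono {A R : α → α → Prop} {c₀ : ι → α} {r₀ : α}
    {Goal Goal' : (ℕ → ι → α) → (ℕ → α) → Prop} (h : EnsureFrom A R c₀ r₀ Goal)
    (hGoal : ∀ cops rob, Goal cops rob → Goal' cops rob) : EnsureFrom A R c₀ r₀ Goal' :=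
  let ⟨σ, hσ⟩ := h
  ⟨σ, fun rob h₀ hmove => (hσ rob h₀ hmove).imp_right (hGoal _ _)⟩

lemma EnsureFrom.of_stay {A R : α → α → Prop} {c₀ : ι → α} {r₀ : α}
    {Goal : (ℕ → ι → α) → (ℕ → α) → Prop} (h : ∀ rob, Goal (fun _ => c₀) rob) :
    EnsureFrom A R c₀ r₀ Goal := by
  refine ⟨fun _ => c₀, fun rob _ _ => ?_⟩
  have hstay : copsFrom (fun _ => c₀) c₀ rob = fun _ => c₀ := funext fun t => by cases t <;> rfl
  rw [hstay]
  exact ⟨fun _ _ => Or.inl rfl, h rob⟩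

def runStates (m₀ : M) (next : α → M → M) (rob : ℕ → α) : ℕ → M
  | 0 => m₀
  | t + 1 => next (rob (t + 1)) (runStates m₀ next rob t)

/-- The history handed to a strategy starts with the robber's initial vertex, which the automaton
skips. -/
def automatonStrategy (m₀ : M) (next : α → M → M) (place : M → ι → α) : List α → ι → α :=
  fun h => place ((h.drop 1).foldl (fun m r => next r m) m₀)

lemma copsFrom_automatonStrategy (m₀ : M) (next : α → M → M) (place : M → ι → α)
    (rob : ℕ → α) (t : ℕ) :
    copsFrom (automatonStrategy m₀ next place) (place m₀) rob t =
      place (runStates m₀ next rob t) := by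
  cases t with
  | zero => rfl
  | succ t =>
    show place _ = place _
    congr 1
    induction t with
    | zero => simp [List.range_succ, runStates]
    | succ t ih =>
      rw [List.range_succ, List.map_append, List.drop_append_of_le_length (by simp),
        List.foldl_append, ih]
      rfl

end Strategies

section Arc

variable {n : ℕ}

def arc (a : ZMod n) (w : ℕ) : Set (ZMod n) := {z | ∃ i : ℕ, i < w ∧ z = a + (i : ZMod n)}

def arcEnd (a : ZMod n) (w : ℕ) (s : ℤ) : ZMod n :=
  if s = 1 then a + ((w - 1 : ℕ) : ZMod n) else a

def cycleNbrs (S : Set (ZMod n)) (z : ZMod n) : Set (ZMod n) :=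
  {z' ∈ S | z' = z + 1 ∨ z' = z - 1}

lemma PM.neg {s : ℤ} (hs : PM s) : PM (-s) := by
  rcases hs with rfl | rfl <;> simp [PM]

variable {a : ZMod n} {w : ℕ} {s : ℤ}

lemma arc_one : arc a 1 = {a} := by
  ext z; simp [arc]

lemma arcEnd_one : arcEnd a 1 s = a := by
  simp [arcEnd]

lemma arcEnd_mem (hw : 1 ≤ w) : arcEnd a w s ∈ arc a w := by
  unfold arcEnd; split_ifs
  · exact ⟨w - 1, by omega, rfl⟩
  · exact ⟨0, hw, by simp⟩

lemma arc_eq_univ [NeZero n] (h : w = n) : arc a w = Set.univ := by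
  subst h
  refine Set.eq_univ_of_forall fun z => ⟨(z - a).val, ZMod.val_lt _, ?_⟩
  rw [ZMod.natCast_zmod_val]; ring

lemma add_mem_arc_of_ne_arcEnd (hs : PM s) {z : ZMod n} (hz : z ∈ arc a w)
    (hne : z ≠ arcEnd a w s) : z + s ∈ arc a w := by
  obtain ⟨i, hi, rfl⟩ := hz
  rcases hs with rfl | rfl
  · have : i ≠ w - 1 := by rintro rfl; simp [arcEnd] at hne
    exact ⟨i + 1, by omega, by push_cast; ring⟩
  · have : i ≠ 0 := by rintro rfl; simp [arcEnd] at hne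
    exact ⟨i - 1, by omega, by rw [Nat.cast_sub (by omega)]; push_cast; ring⟩

lemma arcEnd_add_notMem (hw : 1 ≤ w) (hwn : w < n) (hs : PM s) : arcEnd a w s + s ∉ arc a w := by
  rintro ⟨i, hi, h⟩
  rcases hs with rfl | rfl
  · have : ((w : ℕ) : ZMod n) = (i : ZMod n) := by
      simp only [arcEnd, if_true, Int.cast_one, Nat.cast_sub hw, Nat.cast_one] at h
      linear_combination h
    rw [ZMod.natCast_eq_natCast_iff', Nat.mod_eq_of_lt hwn, Nat.mod_eq_of_lt (by omega)] at this
    omega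
  · have : ((i + 1 : ℕ) : ZMod n) = 0 := by
      simp only [arcEnd, show (-1 : ℤ) ≠ 1 by norm_num, if_false, Int.cast_neg, Int.cast_one] at h
      push_cast; linear_combination -h
    rw [ZMod.natCast_eq_zero_iff] at this
    exact absurd (Nat.le_of_dvd (by omega) this) (by omega)

lemma arcEnd_ne_arcEnd_neg (hw : 2 ≤ w) (hwn : w < n) (hs : PM s) :
    arcEnd a w s ≠ arcEnd a w (-s) := by
  have key : a + ((w - 1 : ℕ) : ZMod n) ≠ a := by
    rw [Ne, add_eq_left, ZMod.natCast_eq_zero_iff]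
    exact fun h => absurd (Nat.le_of_dvd (by omega) h) (by omega)
  rcases hs with rfl | rfl
  · simpa [arcEnd] using key
  · simpa [arcEnd] using key.symm

lemma arcEnd_neg_add_mem (hw : 2 ≤ w) (hwn : w < n) (hs : PM s) :
    arcEnd a w (-s) + s ∈ arc a w := by
  have h := arcEnd_ne_arcEnd_neg (a := a) hw hwn hs.neg
  rw [neg_neg] at h
  exact add_mem_arc_of_ne_arcEnd hs (arcEnd_mem (by omega)) h

lemma add_mem_arc_of_ne_arcEnds (hs : PM s) {t : ℤ} (ht : PM t) {z : ZMod n} (hz : z ∈ arc a w)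
    (h₁ : z ≠ arcEnd a w s) (h₂ : z ≠ arcEnd a w (-s)) : z + t ∈ arc a w := by
  obtain rfl | rfl : t = s ∨ t = -s := by
    rcases hs with rfl | rfl <;> rcases ht with rfl | rfl <;> simp
  · exact add_mem_arc_of_ne_arcEnd hs hz h₁
  · exact add_mem_arc_of_ne_arcEnd hs.neg hz h₂

lemma ncard_cycleNbrs_arcEnd_le_one (hw : 1 ≤ w) (hwn : w < n) (hs : PM s) :
    (cycleNbrs (arc a w) (arcEnd a w s)).ncard ≤ 1 := by
  have hout := arcEnd_add_notMem (a := a) hw hwn hs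
  refine (Set.ncard_le_ncard (t := {arcEnd a w s - s}) ?_).trans (Set.ncard_singleton _).le
  rintro z ⟨hz, h | h⟩ <;> rcases hs with rfl | rfl <;> subst h <;> simp_all [sub_eq_add_neg]

lemma cycleNbrs_arc_one (hn : 2 ≤ n) : cycleNbrs (arc a 1) a = ∅ := by
  have : Fact (1 < n) := ⟨hn⟩
  refine Set.eq_empty_of_forall_notMem fun z ⟨hz, h⟩ => ?_
  rw [arc_one, Set.mem_singleton_iff] at hz
  subst hz
  rcases h with h | h
  · exact one_ne_zero (by linear_combination -h)
  · exact one_ne_zero (by linear_combination h)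

lemma one_le_ncard_cycleNbrs [NeZero n] (hw : 2 ≤ w) (hwn : w < n) {z : ZMod n}
    (hz : z ∈ arc a w) : 1 ≤ (cycleNbrs (arc a w) z).ncard := by
  apply (Set.ncard_pos (Set.toFinite _)).2
  by_cases h : z = arcEnd a w 1
  · have hne : z ≠ arcEnd a w (-1) := by rw [h]; exact arcEnd_ne_arcEnd_neg hw hwn (Or.inl rfl)
    exact ⟨_, add_mem_arc_of_ne_arcEnd (Or.inr rfl) hz hne, Or.inr (by simp [sub_eq_add_neg])⟩
  · exact ⟨_, add_mem_arc_of_ne_arcEnd (Or.inl rfl) hz h, Or.inl (by simp)⟩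

lemma ncard_cycleNbrs_arcEnd_le [NeZero n] (hw : 1 ≤ w) (hwn : w < n) (hs : PM s)
    {z : ZMod n} (hz : z ∈ arc a w) :
    (cycleNbrs (arc a w) (arcEnd a w s)).ncard ≤ (cycleNbrs (arc a w) z).ncard := by
  rcases Nat.lt_or_ge w 2 with h | h
  · obtain rfl : w = 1 := by omega
    simp [arcEnd_one, cycleNbrs_arc_one (a := a) (by omega)]
  · exact (ncard_cycleNbrs_arcEnd_le_one hw hwn hs).trans (one_le_ncard_cycleNbrs h hwn hz)

end Arc

section Grid

variable {n : ℕ} {δ ε : ZMod n → ℤ}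

lemma PM.eq_add_or_eq_add_iff {R : Type*} [CommRing R] {s : ℤ} (hs : PM s) {a b : R} :
    (b = a + s ∨ a = b + s) ↔ (b = a + 1 ∨ b = a - 1) := by
  rcases hs with rfl | rfl
  · simp only [Int.cast_one]
    exact or_congr Iff.rfl ⟨fun h => by rw [h]; ring, fun h => by rw [h]; ring⟩
  · simp only [Int.cast_neg, Int.cast_one, ← sub_eq_add_neg]
    exact or_comm.trans (or_congr ⟨fun h => by rw [h]; ring, fun h => by rw [h]; ring⟩ Iff.rfl)

lemma adj_iff {p q : Vtx n} : Adj δ ε p q ↔ q = vOut δ p ∨ q = hOut ε p := by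
  simp only [Adj, vOut, hOut, Prod.ext_iff]

lemma uAdj_iff (hδ : ∀ y, PM (δ y)) (hε : ∀ x, PM (ε x)) {p q : Vtx n} :
    UAdj δ ε p q ↔ (q.1 = p.1 + 1 ∨ q.1 = p.1 - 1) ∧ q.2 = p.2 ∨
      q.1 = p.1 ∧ (q.2 = p.2 + 1 ∨ q.2 = p.2 - 1) := by
  obtain ⟨x, y⟩ := p
  obtain ⟨x', y'⟩ := q
  simp only [UAdj, Adj]
  constructor
  · rintro ((⟨h, rfl⟩ | ⟨rfl, h⟩) | (⟨h, rfl⟩ | ⟨rfl, h⟩))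
    · exact Or.inl ⟨(hδ _).eq_add_or_eq_add_iff.1 (Or.inl h), rfl⟩
    · exact Or.inr ⟨rfl, (hε _).eq_add_or_eq_add_iff.1 (Or.inl h)⟩
    · exact Or.inl ⟨(hδ _).eq_add_or_eq_add_iff.1 (Or.inr h), rfl⟩
    · exact Or.inr ⟨rfl, (hε _).eq_add_or_eq_add_iff.1 (Or.inr h)⟩
  · rintro (⟨h, rfl⟩ | ⟨rfl, h⟩)
    · rcases (hδ _).eq_add_or_eq_add_iff.2 h with h | h
      · exact Or.inl (Or.inl ⟨h, rfl⟩)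
      · exact Or.inr (Or.inl ⟨h, rfl⟩)
    · rcases (hε _).eq_add_or_eq_add_iff.2 h with h | h
      · exact Or.inl (Or.inr ⟨rfl, h⟩)
      · exact Or.inr (Or.inr ⟨rfl, h⟩)

lemma nbrCount_prod (hδ : ∀ y, PM (δ y)) (hε : ∀ x, PM (ε x)) (hn : 2 ≤ n)
    {X Y : Set (ZMod n)} {v : Vtx n} (hv : v ∈ X ×ˢ Y) :
    nbrCount δ ε (X ×ˢ Y) v = (cycleNbrs X v.1).ncard + (cycleNbrs Y v.2).ncard := by
  have : Fact (1 < n) := ⟨hn⟩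
  have hsplit : {u ∈ X ×ˢ Y | UAdj δ ε v u} =
      (fun x => (x, v.2)) '' cycleNbrs X v.1 ∪ (fun y => (v.1, y)) '' cycleNbrs Y v.2 := by
    ext ⟨x, y⟩
    simp only [Set.mem_ofPred_eq, Set.mem_prod, uAdj_iff hδ hε, cycleNbrs, Set.mem_union,
      Set.mem_image, Prod.mk.injEq]
    constructor
    · rintro ⟨⟨hx, hy⟩, ⟨h, rfl⟩ | ⟨rfl, h⟩⟩
      · exact Or.inl ⟨x, ⟨hx, h⟩, rfl, rfl⟩
      · exact Or.inr ⟨y, ⟨hy, h⟩, rfl, rfl⟩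
    · rintro (⟨x, ⟨hx, h⟩, rfl, rfl⟩ | ⟨y, ⟨hy, h⟩, rfl, rfl⟩)
      · exact ⟨⟨hx, hv.2⟩, Or.inl ⟨h, rfl⟩⟩
      · exact ⟨⟨hv.1, hy⟩, Or.inr ⟨rfl, h⟩⟩
  have hdisj : Disjoint ((fun x => (x, v.2)) '' cycleNbrs X v.1)
      ((fun y => (v.1, y)) '' cycleNbrs Y v.2) := by
    rw [Set.disjoint_left]
    rintro _ ⟨x, ⟨-, hx⟩, rfl⟩ ⟨y, -, hxy⟩
    obtain rfl : v.1 = x := congrArg Prod.fst hxy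
    rcases hx with h | h
    · exact one_ne_zero (by linear_combination -h)
    · exact one_ne_zero (by linear_combination h)
  rw [nbrCount, hsplit, Set.ncard_union_eq hdisj,
    Set.ncard_image_of_injective _ (fun _ _ h => congrArg Prod.fst h),
    Set.ncard_image_of_injective _ (fun _ _ h => congrArg Prod.snd h)]

lemma outCount_eq_one_of_vOut_notMem {K : Set (Vtx n)} {v : Vtx n} (h₁ : vOut δ v ∉ K)
    (h₂ : hOut ε v ∈ K) : outCount δ ε K v = 1 := by
  rw [outCount, ← Set.ncard_singleton (hOut ε v)]
  congr 1
  ext u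
  simp only [Set.mem_sep_iff, adj_iff, Set.mem_singleton_iff]
  constructor
  · rintro ⟨hu, rfl | rfl⟩
    · exact absurd hu h₁
    · rfl
  · rintro rfl
    exact ⟨h₂, Or.inr rfl⟩

lemma outCount_eq_one_of_hOut_notMem {K : Set (Vtx n)} {v : Vtx n} (h₁ : vOut δ v ∈ K)
    (h₂ : hOut ε v ∉ K) : outCount δ ε K v = 1 := by
  rw [outCount, ← Set.ncard_singleton (vOut δ v)]
  congr 1
  ext u
  simp only [Set.mem_sep_iff, adj_iff, Set.mem_singleton_iff]
  constructor
  · rintro ⟨hu, rfl | rfl⟩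
    · rfl
    · exact absurd hu h₂
  · rintro rfl
    exact ⟨h₁, Or.inl rfl⟩

lemma not_adj_of_vOut_notMem_of_hOut_notMem {K : Set (Vtx n)} {v : Vtx n} (h₁ : vOut δ v ∉ K)
    (h₂ : hOut ε v ∉ K) : ∀ u ∈ K, ¬ Adj δ ε v u := by
  rintro u hu h
  rcases adj_iff.1 h with rfl | rfl
  exacts [h₁ hu, h₂ hu]

end Grid

namespace Strm

variable {n : ℕ} {δ ε : ZMod n → ℤ} (S : Strm n δ ε)

lemma mem_verts_iff_of_vert (h : S.vert = true) {p : Vtx n} :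
    p ∈ S.verts ↔ p.2 ∈ arc S.a S.w := by
  simp [verts, proj, h, arc]

lemma mem_verts_iff_of_not_vert (h : S.vert = false) {p : Vtx n} :
    p ∈ S.verts ↔ p.1 ∈ arc S.a S.w := by
  simp [verts, proj, h, arc]

lemma δ_eq_of_vert (h : S.vert = true) : ∀ y ∈ arc S.a S.w, δ y = δ S.a := by
  rintro _ ⟨i, hi, rfl⟩
  simpa [h] using S.const i hi

lemma ε_eq_of_not_vert (h : S.vert = false) : ∀ x ∈ arc S.a S.w, ε x = ε S.a := by
  rintro _ ⟨i, hi, rfl⟩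
  simpa [h] using S.const i hi

lemma verts_eq_univ (h : S.w = n) : S.verts = Set.univ := by
  have : NeZero n := ⟨by have := S.one_le; omega⟩
  refine Set.eq_univ_of_forall fun p => ?_
  show S.proj p ∈ arc S.a S.w
  rw [arc_eq_univ h]
  trivial

end Strm

/-- `row x`: the robber has left `K` along a column and is held in the column stream by the two
cops on `(x, ye)` and `(x, yo)`, `x` being his current row; `col y` is the transposed situation. -/
inductive Phase (n : ℕ)
  | corner
  | row (x : ZMod n)
  | col (y : ZMod n)

/-- The conflux of the stream of rows `x ∈ arc ax wx` and the stream of columns `y ∈ arc ay wy`,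
neither of which covers the whole grid. -/
structure Box (n : ℕ) (δ ε : ZMod n → ℤ) where
  ax : ZMod n
  wx : ℕ
  ay : ZMod n
  wy : ℕ
  one_le_wx : 1 ≤ wx
  wx_lt : wx < n
  one_le_wy : 1 ≤ wy
  wy_lt : wy < n
  δ_eq : ∀ y ∈ arc ay wy, δ y = δ ay
  ε_eq : ∀ x ∈ arc ax wx, ε x = ε ax

namespace Box

variable {n : ℕ} {δ ε : ZMod n → ℤ} (B : Box n δ ε)

abbrev X : Set (ZMod n) := arc B.ax B.wx

abbrev Y : Set (ZMod n) := arc B.ay B.wy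

abbrev K : Set (Vtx n) := B.X ×ˢ B.Y

/- Inside `K` the robber moves in direction `δ ay` along `X` and `ε ax` along `Y`: `xe`, `ye` are
the ends of `X`, `Y` through which he can leave, `xo`, `yo` the opposite ends. -/
def xe : ZMod n := arcEnd B.ax B.wx (δ B.ay)

def xo : ZMod n := arcEnd B.ax B.wx (-δ B.ay)

def ye : ZMod n := arcEnd B.ay B.wy (ε B.ax)

def yo : ZMod n := arcEnd B.ay B.wy (-ε B.ax)

lemma two_le (B : Box n δ ε) : 2 ≤ n := by have := B.one_le_wx; have := B.wx_lt; omega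

lemma neZero (B : Box n δ ε) : NeZero n := ⟨by have := B.two_le; omega⟩

lemma xe_mem : B.xe ∈ B.X := arcEnd_mem B.one_le_wx

lemma xo_mem : B.xo ∈ B.X := arcEnd_mem B.one_le_wx

lemma ye_mem : B.ye ∈ B.Y := arcEnd_mem B.one_le_wy

lemma yo_mem : B.yo ∈ B.Y := arcEnd_mem B.one_le_wy

lemma corner_arcEnd (hδ : ∀ y, PM (δ y)) (hε : ∀ x, PM (ε x)) {s t : ℤ} (hs : PM s) (ht : PM t) :
    Corner δ ε B.K (arcEnd B.ax B.wx s, arcEnd B.ay B.wy t) := by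
  have := B.neZero
  have hv : (arcEnd B.ax B.wx s, arcEnd B.ay B.wy t) ∈ B.K :=
    ⟨arcEnd_mem B.one_le_wx, arcEnd_mem B.one_le_wy⟩
  refine ⟨hv, fun u hu => ?_⟩
  rw [nbrCount_prod hδ hε B.two_le hv, nbrCount_prod hδ hε B.two_le hu]
  exact add_le_add (ncard_cycleNbrs_arcEnd_le B.one_le_wx B.wx_lt hs hu.1)
    (ncard_cycleNbrs_arcEnd_le B.one_le_wy B.wy_lt ht hu.2)

lemma vOut_of_mem_Y {x y : ZMod n} (hy : y ∈ B.Y) : vOut δ (x, y) = (x + δ B.ay, y) := by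
  simp [vOut, B.δ_eq y hy]

lemma hOut_of_mem_X {x y : ZMod n} (hx : x ∈ B.X) : hOut ε (x, y) = (x, y + ε B.ax) := by
  simp [hOut, B.ε_eq x hx]

lemma xe_add_notMem (hδ : ∀ y, PM (δ y)) : B.xe + δ B.ay ∉ B.X :=
  arcEnd_add_notMem B.one_le_wx B.wx_lt (hδ _)

lemma ye_add_notMem (hε : ∀ x, PM (ε x)) : B.ye + ε B.ax ∉ B.Y :=
  arcEnd_add_notMem B.one_le_wy B.wy_lt (hε _)

lemma xo_add_mem (hδ : ∀ y, PM (δ y)) (h : 2 ≤ B.wx) : B.xo + δ B.ay ∈ B.X :=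
  arcEnd_neg_add_mem h B.wx_lt (hδ _)

lemma yo_add_mem (hε : ∀ x, PM (ε x)) (h : 2 ≤ B.wy) : B.yo + ε B.ax ∈ B.Y :=
  arcEnd_neg_add_mem h B.wy_lt (hε _)

lemma mainCorner_xe_yo (hδ : ∀ y, PM (δ y)) (hε : ∀ x, PM (ε x)) (h : 2 ≤ B.wy) :
    MainCorner δ ε B.K (B.xe, B.yo) := by
  refine ⟨B.corner_arcEnd hδ hε (hδ _) (hε _).neg, Or.inr ?_⟩
  rw [outCount_eq_one_of_vOut_notMem]
  · exact odd_one
  · rw [B.vOut_of_mem_Y B.yo_mem]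
    exact fun h => B.xe_add_notMem hδ h.1
  · rw [B.hOut_of_mem_X B.xe_mem]
    exact ⟨B.xe_mem, B.yo_add_mem hε h⟩

lemma mainCorner_xo_ye (hδ : ∀ y, PM (δ y)) (hε : ∀ x, PM (ε x)) (h : 2 ≤ B.wx) :
    MainCorner δ ε B.K (B.xo, B.ye) := by
  refine ⟨B.corner_arcEnd hδ hε (hδ _).neg (hε _), Or.inr ?_⟩
  rw [outCount_eq_one_of_hOut_notMem]
  · exact odd_one
  · rw [B.vOut_of_mem_Y B.ye_mem]
    exact ⟨B.xo_add_mem hδ h, B.ye_mem⟩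
  · rw [B.hOut_of_mem_X B.xo_mem]
    exact fun h => B.ye_add_notMem hε h.2

lemma mainCorner_or_secNoOut_xe_ye (hδ : ∀ y, PM (δ y)) (hε : ∀ x, PM (ε x)) :
    MainCorner δ ε B.K (B.xe, B.ye) ∨ SecNoOut δ ε B.K (B.xe, B.ye) := by
  refine or_iff_not_imp_left.2 fun hmain => ⟨B.corner_arcEnd hδ hε (hδ _) (hε _), hmain, ?_⟩
  refine not_adj_of_vOut_notMem_of_hOut_notMem ?_ ?_
  · rw [B.vOut_of_mem_Y B.ye_mem]
    exact fun h => B.xe_add_notMem hδ h.1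
  · rw [B.hOut_of_mem_X B.xe_mem]
    exact fun h => B.ye_add_notMem hε h.2

def guards : Set (Vtx n) := {(B.xe, B.ye), (B.xe, B.yo), (B.xo, B.ye)}

lemma guards_subset (hδ : ∀ y, PM (δ y)) (hε : ∀ x, PM (ε x)) :
    B.guards ⊆ {v | MainCorner δ ε B.K v ∨ SecNoOut δ ε B.K v} := by
  rintro v (rfl | rfl | rfl)
  · exact B.mainCorner_or_secNoOut_xe_ye hδ hε
  · by_cases h : 2 ≤ B.wy
    · exact Or.inl (B.mainCorner_xe_yo hδ hε h)
    · have hyo : B.yo = B.ye := by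
        simp only [yo, ye, show B.wy = 1 by have := B.one_le_wy; omega, arcEnd_one]
      rw [hyo]
      exact B.mainCorner_or_secNoOut_xe_ye hδ hε
  · by_cases h : 2 ≤ B.wx
    · exact Or.inl (B.mainCorner_xo_ye hδ hε h)
    · have hxo : B.xo = B.xe := by
        simp only [xo, xe, show B.wx = 1 by have := B.one_le_wx; omega, arcEnd_one]
      rw [hxo]
      exact B.mainCorner_or_secNoOut_xe_ye hδ hε

def next (r : Vtx n) : Phase n → Phase n
  | .corner =>
    if r.1 = B.xe + δ B.ay then .row r.1 else if r.2 = B.ye + ε B.ax then .col r.2 else .corner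
  | .row x => if r.1 = x + δ B.ay then .row r.1 else .row x
  | .col y => if r.2 = y + ε B.ax then .col r.2 else .col y

/-- The vertex occupied in phase `p` by the cop that started on `v`. -/
def cop (v : Vtx n) : Phase n → Vtx n
  | .corner => v
  | .row x => if v.1 = B.xe ∧ (v.2 = B.ye ∨ v.2 = B.yo) then (x, v.2) else v
  | .col y => if v.2 = B.ye ∧ (v.1 = B.xe ∨ v.1 = B.xo) then (v.1, y) else v

lemma adj_add_right {x y : ZMod n} (hy : y ∈ B.Y) : Adj δ ε (x, y) (x + δ B.ay, y) :=
  Or.inl ⟨by rw [B.δ_eq y hy], rfl⟩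

lemma adj_add_left {x y : ZMod n} (hx : x ∈ B.X) : Adj δ ε (x, y) (x, y + ε B.ax) :=
  Or.inr ⟨rfl, by rw [B.ε_eq x hx]⟩

lemma step_cop_next (v r : Vtx n) (p : Phase n) :
    Step (Adj δ ε) (B.cop v p) (B.cop v (B.next r p)) := by
  have hY : v.2 = B.ye ∨ v.2 = B.yo → v.2 ∈ B.Y := by
    rintro (h | h) <;> rw [h]
    exacts [B.ye_mem, B.yo_mem]
  have hX : v.1 = B.xe ∨ v.1 = B.xo → v.1 ∈ B.X := by
    rintro (h | h) <;> rw [h]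
    exacts [B.xe_mem, B.xo_mem]
  cases p with
  | corner =>
    simp only [next]
    split_ifs with h₁ h₂ <;> simp only [cop]
    · split_ifs with hv
      · rw [h₁, ← hv.1]; exact Or.inr (B.adj_add_right (hY hv.2))
      · exact Or.inl rfl
    · split_ifs with hv
      · rw [h₂, ← hv.1]; exact Or.inr (B.adj_add_left (hX hv.2))
      · exact Or.inl rfl
    · exact Or.inl rfl
  | row x =>
    simp only [next]
    split_ifs with h₁ <;> simp only [cop]
    · split_ifs with hv
      · rw [h₁]; exact Or.inr (B.adj_add_right (hY hv.2))
      · exact Or.inl rfl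
    · exact Or.inl rfl
  | col y =>
    simp only [next]
    split_ifs with h₁ <;> simp only [cop]
    · split_ifs with hv
      · rw [h₁]; exact Or.inr (B.adj_add_left (hX hv.2))
      · exact Or.inl rfl
    · exact Or.inl rfl

def Trapped (r : Vtx n) : Phase n → Prop
  | .corner => r ∈ B.K
  | .row x => r.1 = x ∧ r.2 ∈ B.Y ∧ r.2 ≠ B.ye ∧ r.2 ≠ B.yo
  | .col y => r.2 = y ∧ r.1 ∈ B.X ∧ r.1 ≠ B.xe ∧ r.1 ≠ B.xo

def Safe (p : Phase n) (r r' : Vtx n) : Prop :=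
  ∀ v ∈ B.guards, B.cop v p ≠ r ∧ B.cop v p ≠ r'

variable {B}

lemma trapped_next_corner (hδ : ∀ y, PM (δ y)) (hε : ∀ x, PM (ε x)) {r r' : Vtx n} (hr : r ∈ B.K)
    (hadj : Adj δ ε r r') (hs : B.Safe .corner r r') : B.Trapped r' (B.next r' .corner) := by
  obtain ⟨x, y⟩ := r
  obtain ⟨hx, hy⟩ := hr
  rcases adj_iff.1 hadj with rfl | rfl
  · rw [B.vOut_of_mem_Y hy]
    by_cases hxe : x = B.xe
    · subst hxe
      have hye : y ≠ B.ye := fun h => (hs (B.xe, B.ye) (by simp [guards])).1 (by rw [h]; rfl)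
      have hyo : y ≠ B.yo := fun h => (hs (B.xe, B.yo) (by simp [guards])).1 (by rw [h]; rfl)
      simp only [next]
      exact ⟨rfl, hy, hye, hyo⟩
    · have h₁ : x + δ B.ay ≠ B.xe + δ B.ay := fun h => hxe (add_right_cancel h)
      have h₂ : y ≠ B.ye + ε B.ax := fun h => B.ye_add_notMem hε (h ▸ hy)
      simp only [next, if_neg h₁, if_neg h₂]
      exact ⟨add_mem_arc_of_ne_arcEnd (hδ _) hx hxe, hy⟩
  · rw [B.hOut_of_mem_X hx]
    by_cases hye : y = B.ye
    · subst hye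
      have hxe : x ≠ B.xe := fun h => (hs (B.xe, B.ye) (by simp [guards])).1 (by rw [h]; rfl)
      have hxo : x ≠ B.xo := fun h => (hs (B.xo, B.ye) (by simp [guards])).1 (by rw [h]; rfl)
      have h₁ : x ≠ B.xe + δ B.ay := fun h => B.xe_add_notMem hδ (h ▸ hx)
      simp only [next, if_neg h₁]
      exact ⟨rfl, hx, hxe, hxo⟩
    · have h₁ : x ≠ B.xe + δ B.ay := fun h => B.xe_add_notMem hδ (h ▸ hx)
      have h₂ : y + ε B.ax ≠ B.ye + ε B.ax := fun h => hye (add_right_cancel h)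
      simp only [next, if_neg h₁, if_neg h₂]
      exact ⟨hx, add_mem_arc_of_ne_arcEnd (hε _) hy hye⟩

lemma trapped_next_row (hε : ∀ x, PM (ε x)) {r r' : Vtx n} {x : ZMod n}
    (hr : B.Trapped r (.row x)) (hadj : Adj δ ε r r') (hs : B.Safe (.row x) r r') :
    B.Trapped r' (B.next r' (.row x)) := by
  obtain ⟨rfl, hy, hye, hyo⟩ := hr
  rcases adj_iff.1 hadj with rfl | rfl
  · rw [← Prod.mk.eta (p := r), B.vOut_of_mem_Y hy]
    simp only [next]
    exact ⟨rfl, hy, hye, hyo⟩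
  · rw [show B.next (hOut ε r) (.row r.1) = .row r.1 from ite_self _]
    refine ⟨rfl, add_mem_arc_of_ne_arcEnds (hε B.ax) (hε r.1) hy hye hyo, fun h => ?_, fun h => ?_⟩
    · exact (hs (B.xe, B.ye) (by simp [guards])).2
        (by simpa [cop] using (Prod.ext rfl h.symm : (r.1, B.ye) = hOut ε r))
    · exact (hs (B.xe, B.yo) (by simp [guards])).2
        (by simpa [cop] using (Prod.ext rfl h.symm : (r.1, B.yo) = hOut ε r))

lemma trapped_next_col (hδ : ∀ y, PM (δ y)) {r r' : Vtx n} {y : ZMod n}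
    (hr : B.Trapped r (.col y)) (hadj : Adj δ ε r r') (hs : B.Safe (.col y) r r') :
    B.Trapped r' (B.next r' (.col y)) := by
  obtain ⟨rfl, hx, hxe, hxo⟩ := hr
  rcases adj_iff.1 hadj with rfl | rfl
  · rw [show B.next (vOut δ r) (.col r.2) = .col r.2 from ite_self _]
    refine ⟨rfl, add_mem_arc_of_ne_arcEnds (hδ B.ay) (hδ r.2) hx hxe hxo, fun h => ?_, fun h => ?_⟩
    · exact (hs (B.xe, B.ye) (by simp [guards])).2
        (by simpa [cop] using (Prod.ext h.symm rfl : (B.xe, r.2) = vOut δ r))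
    · exact (hs (B.xo, B.ye) (by simp [guards])).2
        (by simpa [cop] using (Prod.ext h.symm rfl : (B.xo, r.2) = vOut δ r))
  · rw [← Prod.mk.eta (p := r), B.hOut_of_mem_X hx]
    simp only [next]
    exact ⟨rfl, hx, hxe, hxo⟩

lemma trapped_next (hδ : ∀ y, PM (δ y)) (hε : ∀ x, PM (ε x)) {r r' : Vtx n} {p : Phase n}
    (hr : B.Trapped r p) (hadj : Adj δ ε r r') (hs : B.Safe p r r') : B.Trapped r' (B.next r' p) :=
  match p with
  | .corner => trapped_next_corner hδ hε hr hadj hs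
  | .row _ => trapped_next_row hε hr hadj hs
  | .col _ => trapped_next_col hδ hr hadj hs

variable (B)

lemma eventually_mem_of_trapped {rob : ℕ → Vtx n}
    (hinv : ∀ t, B.Trapped (rob t) (runStates .corner B.next rob t)) :
    (∃ T, ∀ t, T ≤ t → (rob t).2 ∈ B.Y) ∨ ∃ T, ∀ t, T ≤ t → (rob t).1 ∈ B.X := by
  by_cases hcol : ∃ T y, runStates .corner B.next rob T = .col y
  · obtain ⟨T, y, hT⟩ := hcol
    have hstays : ∀ t, T ≤ t → ∃ y, runStates .corner B.next rob t = .col y := by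
      intro t ht
      induction t, ht using Nat.le_induction with
      | base => exact ⟨y, hT⟩
      | succ t _ ih =>
        obtain ⟨y, hy⟩ := ih
        simp only [runStates, hy, next]
        split_ifs <;> exact ⟨_, rfl⟩
    refine Or.inr ⟨T, fun t ht => ?_⟩
    obtain ⟨y, hy⟩ := hstays t ht
    have h := hinv t
    rw [hy] at h
    exact h.2.1
  · simp only [not_exists] at hcol
    refine Or.inl ⟨0, fun t _ => ?_⟩
    have h := hinv t
    cases hp : runStates .corner B.next rob t with
    | corner => rw [hp] at h; exact h.2
    | row x => rw [hp] at h; exact h.2.1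
    | col y => exact absurd hp (hcol t y)

theorem ensureFrom_trap (hδ : ∀ y, PM (δ y)) (hε : ∀ x, PM (ε x)) {ι : Type*} (c₀ : ι → Vtx n)
    (hguards : B.guards ⊆ Set.range c₀) {r₀ : Vtx n} (hr₀ : r₀ ∈ B.K) :
    EnsureFrom (Adj δ ε) (Adj δ ε) c₀ r₀ fun cops rob => Captured cops rob ∨
      (∃ T, ∀ t, T ≤ t → (rob t).2 ∈ B.Y) ∨ ∃ T, ∀ t, T ≤ t → (rob t).1 ∈ B.X := by
  let place : Phase n → ι → Vtx n := fun p i => B.cop (c₀ i) p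
  refine ⟨automatonStrategy .corner B.next place, fun rob h₀ hmove => ?_⟩
  have hcops : copsFrom (automatonStrategy .corner B.next place) c₀ rob =
      fun t => place (runStates .corner B.next rob t) :=
    funext (copsFrom_automatonStrategy .corner B.next place rob)
  rw [hcops]
  refine ⟨fun t i => B.step_cop_next _ _ _, or_iff_not_imp_left.2 fun hfree => ?_⟩
  have hsafe : ∀ t, B.Safe (runStates .corner B.next rob t) (rob t) (rob (t + 1)) := by
    intro t v hv
    obtain ⟨i, rfl⟩ := hguards hv
    simp only [Captured, not_exists, not_or] at hfree
    exact hfree t i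
  have hinv : ∀ t, B.Trapped (rob t) (runStates .corner B.next rob t) := by
    intro t
    induction t with
    | zero => rw [h₀]; exact hr₀
    | succ t ih => exact B.trapped_next hδ hε ih (hmove t) (hsafe t)
  exact B.eventually_mem_of_trapped hinv

def ofStreams (S₁ S₂ : Strm n δ ε) (h₁ : S₁.vert = true) (h₂ : S₂.vert = false)
    (hw₁ : S₁.w < n) (hw₂ : S₂.w < n) : Box n δ ε where
  ax := S₂.a
  wx := S₂.w
  ay := S₁.a
  wy := S₁.w
  one_le_wx := S₂.one_le
  wx_lt := hw₂
  one_le_wy := S₁.one_le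
  wy_lt := hw₁
  δ_eq := S₁.δ_eq_of_vert h₁
  ε_eq := S₂.ε_eq_of_not_vert h₂

lemma K_ofStreams (S₁ S₂ : Strm n δ ε) (h₁ : S₁.vert = true) (h₂ : S₂.vert = false)
    (hw₁ : S₁.w < n) (hw₂ : S₂.w < n) :
    (ofStreams S₁ S₂ h₁ h₂ hw₁ hw₂).K = S₁.verts ∩ S₂.verts := by
  ext p
  rw [Set.mem_inter_iff, S₁.mem_verts_iff_of_vert h₁, S₂.mem_verts_iff_of_not_vert h₂, and_comm]
  rfl

end Box

theorem trap_two_general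
    (n : ℕ) (δ ε : ZMod n → ℤ)
    (hδ : ∀ y, PM (δ y)) (hε : ∀ x, PM (ε x))
    (S₁ S₂ : Strm n δ ε) (h₁ : S₁.vert = true) (h₂ : S₂.vert = false)
    (K : Set (Vtx n)) (hK : K = S₁.verts ∩ S₂.verts)
    (r₀ : Vtx n) (hr : r₀ ∈ K) :
    EnsureFrom (Adj δ ε) (Adj δ ε)
      (Sum.elim (fun i : {v : Vtx n // MainCorner δ ε K v} => i.val)
                (fun i : {v : Vtx n // SecNoOut δ ε K v} => i.val)) r₀
      (fun cops rob => Captured cops rob ∨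
        ∃ S : Strm n δ ε, K ⊆ S.verts ∧ ∃ T, ∀ t, T ≤ t → rob t ∈ S.verts) := by
  by_cases hw₁ : S₁.w = n
  · exact EnsureFrom.of_stay fun _ => Or.inr
      ⟨S₁, hK ▸ Set.inter_subset_left, 0, fun _ _ => by simp [S₁.verts_eq_univ hw₁]⟩
  by_cases hw₂ : S₂.w = n
  · exact EnsureFrom.of_stay fun _ => Or.inr
      ⟨S₂, hK ▸ Set.inter_subset_right, 0, fun _ _ => by simp [S₂.verts_eq_univ hw₂]⟩
  set B := Box.ofStreams S₁ S₂ h₁ h₂ (S₁.le_n.lt_of_ne hw₁) (S₂.le_n.lt_of_ne hw₂)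
  obtain rfl : K = B.K := hK.trans (Box.K_ofStreams ..).symm
  refine (B.ensureFrom_trap hδ hε _ (fun v hv => ?_) hr).mono ?_
  · rcases B.guards_subset hδ hε hv with h | h
    exacts [⟨.inl ⟨v, h⟩, rfl⟩, ⟨.inr ⟨v, h⟩, rfl⟩]
  rintro cops rob (hcap | ⟨T, hT⟩ | ⟨T, hT⟩)
  · exact Or.inl hcap
  · exact Or.inr ⟨S₁, hK ▸ Set.inter_subset_left, T,
      fun t ht => (S₁.mem_verts_iff_of_vert h₁).2 (hT t ht)⟩
  · exact Or.inr ⟨S₂, hK ▸ Set.inter_subset_right, T,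
      fun t ht => (S₂.mem_verts_iff_of_not_vert h₂).2 (hT t ht)⟩

/-- (Lemma `trap2`.)  In the forced-move game, if the cops
occupy all main corners of a conflux `K` together with the secondary corner of
`K` without out-neighbours in `K` (if such a corner exists), and the robber is
in `K`, then the cops can guarantee that the robber is captured or confined to
a stream containing `K`. -/
theorem trap_two
    (n : ℕ) (hn : 1 ≤ n) (δ ε : ZMod n → ℤ)
    (hδ : ∀ y, PM (δ y)) (hε : ∀ x, PM (ε x))
    (S₁ S₂ : Strm n δ ε) (h₁ : S₁.vert = true) (h₂ : S₂.vert = false)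
    (K : Set (Vtx n)) (hK : K = S₁.verts ∩ S₂.verts) (hKne : K.Nonempty)
    (r₀ : Vtx n) (hr : r₀ ∈ K) :
    EnsureFrom (Adj δ ε) (Adj δ ε)
      (Sum.elim (fun i : {v : Vtx n // MainCorner δ ε K v} => i.val)
                (fun i : {v : Vtx n // SecNoOut δ ε K v} => i.val)) r₀
      (fun cops rob => Captured cops rob ∨
        ∃ S : Strm n δ ε, K ⊆ S.verts ∧ ∃ T, ∀ t, T ≤ t → rob t ∈ S.verts) :=
  trap_two_general n δ ε hδ hε S₁ S₂ h₁ h₂ K hK r₀ hr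

end CopsPaper
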